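/- Let H be a finite graph with root o, and consider the exploration of its edge set that first iteratively reveals all edges incident to the growing cluster of o (always picking the smallest-index admissible edge), and then reveals the remaining edges in order. If at step k+1 the revealed history is (e,x) and the edge e_{k+1} = {v,w} is pivotal for the event {C_o ∩ G = ∅} (for some vertex coloring), then exactly one endpoint, say v, is connected to o by open revealed edges, and the other endpoint w is connected to some green vertex by a path of open edges none of which has been revealed among e_1,…,e_{k+1}. -/

import Mathlib

open scoped ENNReal

/-- The graph of open edges of `H` lying in the set `S` of edges. -/
def openOn {V : Type*} (H : SimpleGraph V) (ω : Sym2 V → Bool) (S : Set (Sym2 V)) :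
    SimpleGraph V where
  Adj a b := H.Adj a b ∧ ω s(a, b) = true ∧ s(a, b) ∈ S
  symm := by
    constructor
    intro a b h
    refine ⟨h.1.symm, ?_, ?_⟩
    · rw [Sym2.eq_swap]; exact h.2.1
    · rw [Sym2.eq_swap]; exact h.2.2
  loopless := ⟨fun a h => H.loopless.1 a h.1⟩

/-- The open cluster `C_o` of the vertex `o` in the configuration `ω`. -/
def cluster {V : Type*} (H : SimpleGraph V) (o : V) (ω : Sym2 V → Bool) : Set V :=
  {v | (openOn H ω Set.univ).Reachable o v}

/-- An exploration of a finite set `E`: an adapted ordering of the coordinates. -/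
structure Exploration (E : Type*) [Fintype E] where
  order : (E → Bool) → Fin (Fintype.card E) → E
  bij : ∀ ω, Function.Bijective (order ω)
  adapted : ∀ ω ω' (k : Fin (Fintype.card E)),
    (∀ j, j < k → order ω j = order ω' j ∧ ω (order ω j) = ω' (order ω j)) →
    order ω k = order ω' k

/-- The set of coordinates revealed strictly before step `k`. -/
def Revealed {E : Type*} [Fintype E] (expl : Exploration E) (ω : E → Bool) (k : ℕ) :
    Set E :=
  {a | ∃ j : Fin (Fintype.card E), (j : ℕ) < k ∧ expl.order ω j = a}

/-- A coordinate `a` is pivotal for `A` at `(ω, η)` if flipping `ω a` changes membership. -/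
def Pivotal {E : Type*} [DecidableEq E] {M : Type*} (A : Set ((E → Bool) × M)) (a : E)
    (z : (E → Bool) × M) : Prop :=
  ¬ (((Function.update z.1 a (! z.1 a), z.2) ∈ A) ↔ z ∈ A)

/-- The unrevealed edges incident to the currently revealed open cluster of `o`. -/
def BoundaryEdges {V : Type*} [Fintype V] [DecidableEq V] (H : SimpleGraph V) (o : V)
    (expl : Exploration (Sym2 V)) (ω : Sym2 V → Bool) (k : ℕ) : Set (Sym2 V) :=
  {a | a ∉ Revealed expl ω k ∧ ∃ v w : V, a = s(v, w) ∧ H.Adj v w ∧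
    (openOn H ω (Revealed expl ω k)).Reachable o v}

/-!
Let `a = e_{k+1}` be pivotal. Since `{C_o ∩ G = ∅}` is decreasing, it holds with `a` closed and
fails with `a` open, so `a = {v, w}` where `v` lies in the cluster of `o` with `a` closed and `w`
is joined, away from that cluster, to a green vertex. As `v` is reachable from `o` while `a` is
unrevealed, the boundary of the revealed cluster is still nonempty at step `k + 1`: the exploration
is in its cluster phase, so `a` is a boundary edge whose cluster endpoint can only be `v`, and every
revealed open edge touches the cluster of `o`, which the path from `w` to the green vertex avoids.
-/

namespace SimpleGraph

variable {V : Type*} {G G' : SimpleGraph V}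

theorem Reachable.exists_adj_of_not_reachable {u v : V} (h : G.Reachable u v)
    (h' : ¬ G'.Reachable u v) :
    ∃ x y, G.Adj x y ∧ G'.Reachable u x ∧ ¬ G'.Reachable u y := by
  obtain ⟨p⟩ := h
  obtain ⟨d, -, hx, hy⟩ := p.exists_boundary_dart {x | G'.Reachable u x} Reachable.rfl h'
  exact ⟨d.fst, d.snd, d.adj, hx, hy⟩

theorem Reachable.of_adj_imp_adj_or_eq {e : Sym2 V}
    (hG : ∀ x y, G'.Adj x y → G.Adj x y ∨ s(x, y) = e) {u v : V} (h : G'.Reachable u v) :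
    G.Reachable u v ∨
      ∃ x y, G'.Adj x y ∧ s(x, y) = e ∧ G.Reachable u x ∧ G.Reachable y v := by
  obtain ⟨p⟩ := h
  induction p with
  | nil => exact .inl .rfl
  | @cons u z v hadj p ih =>
    rcases hG u z hadj with hG' | he
    · rcases ih with h | ⟨x, y, hxy, he, hzx, hyv⟩
      · exact .inl (hG'.reachable.trans h)
      · exact .inr ⟨x, y, hxy, he, hG'.reachable.trans hzx, hyv⟩
    · rcases ih with h | ⟨x, y, -, he', -, hyv⟩
      · exact .inr ⟨u, z, hadj, he, .rfl, h⟩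
      · rcases Sym2.eq_iff.mp (he.trans he'.symm) with ⟨-, rfl⟩ | ⟨rfl, -⟩
        · exact .inr ⟨u, z, hadj, he, .rfl, hyv⟩
        · exact .inl hyv

theorem Reachable.mono_of_not_reachable {u x y : V}
    (hG : ∀ a b, G.Adj a b → ¬ G.Reachable u a → G'.Adj a b) (h : G.Reachable x y)
    (hx : ¬ G.Reachable u x) : G'.Reachable x y := by
  obtain ⟨p⟩ := h
  induction p with
  | nil => exact .rfl
  | cons hadj p ih =>
    exact (hG _ _ hadj hx).reachable.trans (ih fun h => hx (h.trans hadj.symm.reachable))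

end SimpleGraph

open Function Set SimpleGraph

lemma pivotal_iff_of_antitone {E M : Type*} [DecidableEq E] {A : Set ((E → Bool) × M)}
    (hA : ∀ ω ω' m, ω ≤ ω' → (ω', m) ∈ A → (ω, m) ∈ A) {a : E} {ω : E → Bool}
    {m : M} :
    Pivotal A a (ω, m) ↔ (update ω a false, m) ∈ A ∧ (update ω a true, m) ∉ A := by
  have hmono := hA (update ω a false) (update ω a true) m
    (update_le_update_iff'.2 (Bool.false_le true))
  cases h : ω a <;>
    simp only [Pivotal, h, Bool.not_false, Bool.not_true,
      (update_eq_self_iff (f := ω) (a := a)).2 h.symm] at hmono ⊢ <;>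
    tauto

section Percolation

variable {V : Type*} (H : SimpleGraph V) (o : V)

lemma openOn_adj {ω : Sym2 V → Bool} {S : Set (Sym2 V)} {x y : V} :
    (openOn H ω S).Adj x y ↔ H.Adj x y ∧ ω s(x, y) = true ∧ s(x, y) ∈ S :=
  Iff.rfl

lemma openOn_mono {ω ω' : Sym2 V → Bool} {S T : Set (Sym2 V)} (hS : S ⊆ T)
    (hω : ∀ e ∈ S, ω e ≤ ω' e) : openOn H ω S ≤ openOn H ω' T :=
  fun _ _ ⟨hxy, he, hmem⟩ => ⟨hxy, Bool.le_iff_imp.1 (hω _ hmem) he, hS hmem⟩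

lemma cluster_mono {ω ω' : Sym2 V → Bool} (h : ω ≤ ω') :
    cluster H o ω ⊆ cluster H o ω' :=
  fun _ hv => hv.mono (openOn_mono H subset_rfl fun e _ => h e)

variable [DecidableEq V]

lemma openOn_update_of_notMem {ω : Sym2 V → Bool} {S : Set (Sym2 V)} {a : Sym2 V}
    (ha : a ∉ S) (b : Bool) : openOn H (update ω a b) S = openOn H ω S := by
  ext x y
  simp only [openOn_adj, and_congr_right_iff]
  intro _
  constructor <;> rintro ⟨he, hmem⟩ <;> refine ⟨?_, hmem⟩ <;>
    rwa [update_of_ne (ne_of_mem_of_not_mem hmem ha)] at *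

lemma openOn_le_update_false {ω : Sym2 V → Bool} {S : Set (Sym2 V)} {a : Sym2 V}
    (ha : a ∉ S) : openOn H ω S ≤ openOn H (update ω a false) univ := by
  rw [← openOn_update_of_notMem H ha false]
  exact openOn_mono H (subset_univ S) fun _ _ => le_rfl

lemma exists_bridge_of_pivotal {ω : Sym2 V → Bool} {η : V → Bool} {a : Sym2 V}
    (h : Pivotal {z : (Sym2 V → Bool) × (V → Bool) | ¬ ∃ v ∈ cluster H o z.1, z.2 v = true}
      a (ω, η)) :
    ∃ v w g, H.Adj v w ∧ s(v, w) = a ∧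
      (openOn H (update ω a false) univ).Reachable o v ∧
      ¬ (openOn H (update ω a false) univ).Reachable o w ∧
      (openOn H (update ω a false) univ).Reachable w g ∧ η g = true := by
  obtain ⟨hclosed, hopen⟩ := (pivotal_iff_of_antitone fun ω ω' m hle h ⟨v, hv, hg⟩ =>
    h ⟨v, cluster_mono H o hle hv, hg⟩).1 h
  simp only [mem_ofPred_eq, not_not] at hclosed hopen
  obtain ⟨g, hog, hg⟩ := hopen
  have hadj : ∀ x y, (openOn H (update ω a true) univ).Adj x y →
      (openOn H (update ω a false) univ).Adj x y ∨ s(x, y) = a := by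
    rintro x y ⟨hxy, he, -⟩
    by_cases hxa : s(x, y) = a
    · exact .inr hxa
    · rw [update_of_ne hxa] at he
      exact .inl ⟨hxy, by rwa [update_of_ne hxa], trivial⟩
  rcases Reachable.of_adj_imp_adj_or_eq hadj hog with hog' | ⟨v, w, hvw, hvwa, hov, hwg⟩
  · exact (hclosed ⟨g, hog', hg⟩).elim
  · exact ⟨v, w, g, hvw.1, hvwa, hov, fun how => hclosed ⟨g, how.trans hwg, hg⟩, hwg, hg⟩

end Percolation

section Revealed

variable {E : Type*} [Fintype E] (expl : Exploration E) (ω : E → Bool)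

lemma revealed_mono {m n : ℕ} (h : m ≤ n) : Revealed expl ω m ⊆ Revealed expl ω n :=
  fun _ ⟨j, hj, hje⟩ => ⟨j, hj.trans_le h, hje⟩

lemma order_notMem_revealed (k : Fin (Fintype.card E)) : expl.order ω k ∉ Revealed expl ω k :=
  fun ⟨_, hj, hjk⟩ => hj.ne (congrArg Fin.val ((expl.bij ω).1 hjk))

lemma revealed_succ (k : Fin (Fintype.card E)) :
    Revealed expl ω (k + 1) = insert (expl.order ω k) (Revealed expl ω k) := by
  ext e
  simp only [Revealed, mem_ofPred_eq, mem_insert_iff, Nat.lt_succ_iff_lt_or_eq, or_and_right,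
    exists_or, Fin.val_inj, exists_eq_left, eq_comm (b := e)]
  exact or_comm

end Revealed

section ClusterFirst

variable {V : Type*} [Fintype V] [DecidableEq V] (H : SimpleGraph V) (o : V)
  (expl : Exploration (Sym2 V))

lemma boundaryEdges_nonempty_of_reachable {ω : Sym2 V → Bool} {n : ℕ} {T : Set (Sym2 V)}
    {x : V} (hx : (openOn H ω T).Reachable o x)
    (hn : ¬ (openOn H ω (Revealed expl ω n)).Reachable o x) :
    (BoundaryEdges H o expl ω n).Nonempty := by
  obtain ⟨p, q, ⟨hpq, hω, -⟩, hop, hoq⟩ := hx.exists_adj_of_not_reachable hn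
  exact ⟨s(p, q), fun hmem => hoq (hop.trans (Adj.reachable ⟨hpq, hω, hmem⟩)),
    p, q, rfl, hpq, hop⟩

lemma boundaryEdges_succ_eq_empty {ω : Sym2 V → Bool} {n : ℕ}
    (h : BoundaryEdges H o expl ω n = ∅) : BoundaryEdges H o expl ω (n + 1) = ∅ := by
  refine eq_empty_of_forall_notMem ?_
  rintro c ⟨hc, x, y, rfl, hxy, hox⟩
  by_cases hx : (openOn H ω (Revealed expl ω n)).Reachable o x
  · exact (eq_empty_iff_forall_notMem.1 h) _
      ⟨fun hmem => hc (revealed_mono expl ω n.le_succ hmem), x, y, rfl, hxy, hx⟩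
  · exact (boundaryEdges_nonempty_of_reachable H o expl hox hx).ne_empty h

lemma boundaryEdges_nonempty_of_le {ω : Sym2 V → Bool} {m n : ℕ} (hmn : m ≤ n)
    (h : (BoundaryEdges H o expl ω n).Nonempty) : (BoundaryEdges H o expl ω m).Nonempty := by
  rw [nonempty_iff_ne_empty] at h ⊢
  contrapose! h
  induction n, hmn using Nat.le_induction with
  | base => exact h
  | succ n _ ih => exact boundaryEdges_succ_eq_empty H o expl ih

variable {H o expl}
  (hcluster : ∀ (ω : Sym2 V → Bool) (k : Fin (Fintype.card (Sym2 V))),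
    (BoundaryEdges H o expl ω k).Nonempty → expl.order ω k ∈ BoundaryEdges H o expl ω k)
include hcluster

/-- While the boundary is nonempty, every revealed edge was a boundary edge when it was
revealed. -/
lemma reachable_of_mem_revealed {ω : Sym2 V → Bool} {n : ℕ}
    (hB : (BoundaryEdges H o expl ω n).Nonempty) {x y : V}
    (hxy : s(x, y) ∈ Revealed expl ω n) (hω : ω s(x, y) = true) :
    (openOn H ω (Revealed expl ω n)).Reachable o x := by
  obtain ⟨j, hjn, hj⟩ := hxy
  obtain ⟨-, v, w, hvw, hadj, hov⟩ :=
    hcluster ω j (boundaryEdges_nonempty_of_le H o expl hjn.le hB)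
  have hle : openOn H ω (Revealed expl ω j) ≤ openOn H ω (Revealed expl ω n) :=
    openOn_mono H (revealed_mono expl ω hjn.le) fun _ _ => le_rfl
  have hvw' : (openOn H ω (Revealed expl ω n)).Adj v w :=
    ⟨hadj, hvw ▸ hj ▸ hω, hvw ▸ ⟨j, hjn, rfl⟩⟩
  rcases Sym2.eq_iff.mp (hj.symm.trans hvw) with ⟨rfl, -⟩ | ⟨rfl, -⟩
  · exact hov.mono hle
  · exact (hov.mono hle).trans hvw'.reachable

lemma reachable_of_mem_revealed_succ {ω : Sym2 V → Bool} {k : Fin (Fintype.card (Sym2 V))}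
    (hB : (BoundaryEdges H o expl ω k).Nonempty) {x y : V}
    (hxy : (openOn H (update ω (expl.order ω k) false) univ).Adj x y)
    (hmem : s(x, y) ∈ Revealed expl ω (k + 1)) :
    (openOn H (update ω (expl.order ω k) false) univ).Reachable o x := by
  obtain ⟨-, hω, -⟩ := hxy
  rw [revealed_succ, mem_insert_iff] at hmem
  rcases hmem with hk | hmem
  · simp [hk] at hω
  · rw [update_of_ne (ne_of_mem_of_not_mem hmem (order_notMem_revealed expl ω k))] at hω
    exact (reachable_of_mem_revealed hcluster hB hmem hω).mono
      (openOn_le_update_false H (order_notMem_revealed expl ω k))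

end ClusterFirst

theorem cluster_first_pivotal_structure_general {V : Type*} [Fintype V] [DecidableEq V]
    (H : SimpleGraph V) (o : V) (idx : Sym2 V ↪ ℕ)
    (expl : Exploration (Sym2 V))
    (hfirst : ∀ (ω : Sym2 V → Bool) (k : Fin (Fintype.card (Sym2 V))),
      (BoundaryEdges H o expl ω k).Nonempty →
        expl.order ω k ∈ BoundaryEdges H o expl ω k ∧
        ∀ b ∈ BoundaryEdges H o expl ω k, idx (expl.order ω k) ≤ idx b)
    (A : Set ((Sym2 V → Bool) × (V → Bool)))
    (hA : A = {z | ¬ ∃ v ∈ cluster H o z.1, z.2 v = true}) :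
    ∀ (ω : Sym2 V → Bool) (η : V → Bool) (k : Fin (Fintype.card (Sym2 V))),
      Pivotal A (expl.order ω k) (ω, η) →
      ∃ v w : V, expl.order ω k = s(v, w) ∧ H.Adj v w ∧
        (openOn H ω (Revealed expl ω (k : ℕ))).Reachable o v ∧
        ¬ (openOn H ω (Revealed expl ω (k : ℕ))).Reachable o w ∧
        ∃ g : V, η g = true ∧
          (openOn H ω (Revealed expl ω ((k : ℕ) + 1))ᶜ).Reachable w g := by
  subst hA
  intro ω η k hpiv
  have hcluster := fun ω k h => (hfirst ω k h).1
  set a := expl.order ω k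
  have ha : a ∉ Revealed expl ω k := order_notMem_revealed expl ω k
  have hle : openOn H ω (Revealed expl ω k) ≤ openOn H (update ω a false) univ :=
    openOn_le_update_false H ha
  obtain ⟨v, w, g, hvw, hvwa, hov, how, hwg, hg⟩ := exists_bridge_of_pivotal H o hpiv
  have hB : (BoundaryEdges H o expl ω k).Nonempty := by
    by_cases hv : (openOn H ω (Revealed expl ω k)).Reachable o v
    · exact ⟨a, ha, v, w, hvwa.symm, hvw, hv⟩
    · have hωa : update ω a false ≤ ω := update_le_self_iff.2 (Bool.false_le _)
      exact boundaryEdges_nonempty_of_reachable H o expl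
        (hov.mono (openOn_mono H subset_rfl fun e _ => hωa e)) hv
  obtain ⟨-, v', w', ha', -, hov'⟩ := hcluster ω k hB
  obtain ⟨rfl, rfl⟩ : v' = v ∧ w' = w := by
    rcases Sym2.eq_iff.mp (ha'.symm.trans hvwa.symm) with h | ⟨rfl, -⟩
    · exact h
    · exact (how (hov'.mono hle)).elim
  refine ⟨v', w', ha', hvw, hov', fun how' => how (how'.mono hle), g, hg, ?_⟩
  have ha_succ : a ∉ (Revealed expl ω (k + 1))ᶜ := fun h =>
    h (revealed_succ expl ω k ▸ mem_insert a _)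
  rw [← openOn_update_of_notMem H ha_succ false]
  refine hwg.mono_of_not_reachable (fun x y hxy hox => ?_) how
  exact ⟨hxy.1, hxy.2.1, fun hmem => hox (reachable_of_mem_revealed_succ hcluster hB hxy hmem)⟩

/-- For the exploration which first reveals (by smallest index) the edges incident to the
growing cluster of `o`, and then the remaining edges by smallest index: if the edge queried
at step `k+1` is pivotal for `{C_o ∩ G = ∅}`, then it has exactly one endpoint `v` connected
to `o` by revealed open edges, while the other endpoint `w` is connected to a green vertex
by open edges none of which has been revealed among `e_1, …, e_{k+1}`. -/
theorem cluster_first_pivotal_structure {V : Type*} [Fintype V] [DecidableEq V]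
    (H : SimpleGraph V) (o : V) (idx : Sym2 V ↪ ℕ)
    (expl : Exploration (Sym2 V))
    (hfirst : ∀ (ω : Sym2 V → Bool) (k : Fin (Fintype.card (Sym2 V))),
      (BoundaryEdges H o expl ω k).Nonempty →
        expl.order ω k ∈ BoundaryEdges H o expl ω k ∧
        ∀ b ∈ BoundaryEdges H o expl ω k, idx (expl.order ω k) ≤ idx b)
    (hsecond : ∀ (ω : Sym2 V → Bool) (k : Fin (Fintype.card (Sym2 V))),
      ¬ (BoundaryEdges H o expl ω k).Nonempty →
        ∀ b ∉ Revealed expl ω (k : ℕ), idx (expl.order ω k) ≤ idx b)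
    (A : Set ((Sym2 V → Bool) × (V → Bool)))
    (hA : A = {z | ¬ ∃ v ∈ cluster H o z.1, z.2 v = true}) :
    ∀ (ω : Sym2 V → Bool) (η : V → Bool) (k : Fin (Fintype.card (Sym2 V))),
      Pivotal A (expl.order ω k) (ω, η) →
      ∃ v w : V, expl.order ω k = s(v, w) ∧ H.Adj v w ∧
        (openOn H ω (Revealed expl ω (k : ℕ))).Reachable o v ∧
        ¬ (openOn H ω (Revealed expl ω (k : ℕ))).Reachable o w ∧
        ∃ g : V, η g = true ∧
          (openOn H ω (Revealed expl ω ((k : ℕ) + 1))ᶜ).Reachable w g :=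
  cluster_first_pivotal_structure_general H o idx expl hfirst A hA
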